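/- Let μ = N(m₁, Σ₁), ν = N(m₂, Σ₂) be Gaussian measures on ℝ^d with Σ₁, Σ₂ positive definite, and consider the SDP: minimize Tr(Z₁) + Tr(Z₂) − 2Tr(Y) over symmetric Z₁, Z₂ and Y ∈ ℝ^{d×d} subject to Z₁ = Σ₁, Z₂ = Σ₂, and [[Z₁, Y],[Yᵀ, Z₂]] ⪰ 0, plus the constant ‖m₁ − m₂‖². Its optimal value equals ‖m₁ − m₂‖² + Tr(Σ₁) + Tr(Σ₂) − 2Tr((Σ₁^{1/2} Σ₂ Σ₁^{1/2})^{1/2}), which is W₂²(μ, ν). -/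

import Mathlib

/-!
Write `s = V₁^{1/2}` and `r = (s V₂ s)^{1/2}`; the claim is that `tr r` is the largest `tr Y`
with `[[V₁, Y], [Yᵀ, V₂]] ⪰ 0`. The trace of a product of two positive semidefinite matrices is
nonnegative, so pairing the block matrix with the dual certificate `[[Λ, -1], [-1, Λ⁻¹]] ⪰ 0`,
`Λ = s⁻¹ r s⁻¹`, gives `2 tr Y ≤ tr (V₁ Λ) + tr (V₂ Λ⁻¹) = 2 tr r`. The bound is attained at
`Y = s r s⁻¹`, whose Schur complement `V₂ - Yᵀ V₁⁻¹ Y` vanishes.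
-/

open Matrix BigOperators

open Classical in
noncomputable def sqrtm {d : ℕ} (A : Matrix (Fin d) (Fin d) ℝ) : Matrix (Fin d) (Fin d) ℝ :=
  if h : A.PosSemidef then
    h.1.eigenvectorUnitary.1 * diagonal ((↑) ∘ (Real.sqrt ·) ∘ h.1.eigenvalues) *
      (star h.1.eigenvectorUnitary : Matrix (Fin d) (Fin d) ℝ)
  else 0

/-- The spectral norm (ℓ²-operator norm) of a real matrix. -/
noncomputable def specNorm {d : ℕ} (M : Matrix (Fin d) (Fin d) ℝ) : ℝ :=
  ‖LinearMap.toContinuousLinearMap (Matrix.toEuclideanLin M)‖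

open scoped MatrixOrder ComplexOrder

namespace Matrix

theorem trace_fromBlocks {n m R : Type*} [Fintype n] [Fintype m] [AddCommMonoid R]
    (A : Matrix n n R) (B : Matrix n m R) (C : Matrix m n R) (D : Matrix m m R) :
    (fromBlocks A B C D).trace = A.trace + D.trace := by
  simp [trace, Fintype.sum_sum_type]

variable {n : Type*} [Fintype n] [DecidableEq n]

theorem PosSemidef.trace_mul_nonneg {𝕜 : Type*} [RCLike 𝕜] {A B : Matrix n n 𝕜}
    (hA : A.PosSemidef) (hB : B.PosSemidef) : 0 ≤ (A * B).trace := by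
  set s := CFC.sqrt B
  have hs : s.PosSemidef := (CFC.sqrt_nonneg B).posSemidef
  calc 0 ≤ (sᴴ * A * s).trace := (hA.conjTranspose_mul_mul_same s).trace_nonneg
    _ = (A * B).trace := by
      rw [hs.1.eq, trace_mul_cycle, CFC.sqrt_mul_sqrt_self B hB.nonneg, trace_mul_comm]

theorem PosDef.posSemidef_fromBlocks_neg_one_inv {𝕜 : Type*} [RCLike 𝕜] {Λ : Matrix n n 𝕜}
    (hΛ : Λ.PosDef) : (fromBlocks Λ (-1) (-1) Λ⁻¹).PosSemidef := by
  have : Invertible Λ := hΛ.isUnit.invertible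
  have h := hΛ.fromBlocks₁₁ (-1) Λ⁻¹
  simp only [conjTranspose_neg, conjTranspose_one, Matrix.neg_mul, Matrix.one_mul,
    Matrix.mul_neg, Matrix.mul_one, neg_neg, sub_self] at h
  exact h.2 .zero

theorem two_mul_trace_le_of_posSemidef_fromBlocks {A B Y Λ₁ Λ₂ : Matrix n n ℝ}
    (hY : (fromBlocks A Y Yᵀ B).PosSemidef) (hΛ : (fromBlocks Λ₁ (-1) (-1) Λ₂).PosSemidef) :
    2 * Y.trace ≤ (A * Λ₁).trace + (B * Λ₂).trace := by
  have h := hY.trace_mul_nonneg hΛ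
  simp only [fromBlocks_multiply, trace_fromBlocks, trace_add, Matrix.mul_neg, Matrix.mul_one,
    trace_neg, trace_transpose] at h
  linarith

theorem trace_le_of_posSemidef_fromBlocks {A B Y s r : Matrix n n ℝ} (hs : s.PosDef)
    (hsA : s * s = A) (hr : r.PosDef) (hrB : r * r = s * B * s)
    (hY : (fromBlocks A Y Yᵀ B).PosSemidef) : Y.trace ≤ r.trace := by
  have hsu : IsUnit s.det := (isUnit_iff_isUnit_det s).1 hs.isUnit
  have hru : IsUnit r.det := (isUnit_iff_isUnit_det r).1 hr.isUnit
  have hΛ : (s⁻¹ * r * s⁻¹).PosDef := by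
    have h := hr.conjTranspose_mul_mul_same (mulVec_injective_of_isUnit
      ((isUnit_iff_isUnit_det _).2 (isUnit_nonsing_inv_det s hsu)))
    rwa [conjTranspose_nonsing_inv, hs.1.eq] at h
  have hΛinv : (s⁻¹ * r * s⁻¹)⁻¹ = s * r⁻¹ * s := by
    rw [mul_inv_rev, mul_inv_rev, nonsing_inv_nonsing_inv s hsu, Matrix.mul_assoc]
  have htrA : (A * (s⁻¹ * r * s⁻¹)).trace = r.trace := by
    rw [← hsA]
    simp only [Matrix.mul_assoc, mul_nonsing_inv_cancel_left _ _ hsu]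
    rw [trace_mul_comm, nonsing_inv_mul_cancel_right _ _ hsu]
  have htrB : (B * (s * r⁻¹ * s)).trace = r.trace := by
    rw [← Matrix.mul_assoc, trace_mul_cycle, ← Matrix.mul_assoc, ← hrB, Matrix.mul_assoc,
      mul_nonsing_inv _ hru, Matrix.mul_one]
  have h := two_mul_trace_le_of_posSemidef_fromBlocks hY hΛ.posSemidef_fromBlocks_neg_one_inv
  rw [hΛinv, htrA, htrB] at h
  linarith

theorem posSemidef_fromBlocks_of_mul_self_eq {A B s r : Matrix n n ℝ} (hA : A.PosDef)
    (hs : s.PosDef) (hsA : s * s = A) (hr : r.IsHermitian) (hrB : r * r = s * B * s) :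
    (fromBlocks A (s * r * s⁻¹) (s * r * s⁻¹)ᵀ B).PosSemidef := by
  have hsu : IsUnit s.det := (isUnit_iff_isUnit_det s).1 hs.isUnit
  have : Invertible A := hA.isUnit.invertible
  have hschur : (s * r * s⁻¹)ᴴ * A⁻¹ * (s * r * s⁻¹) = B := by
    rw [conjTranspose_mul, conjTranspose_mul, conjTranspose_nonsing_inv, hs.1.eq, hr.eq, ← hsA,
      mul_inv_rev]
    calc _ = s⁻¹ * (r * r) * s⁻¹ := by
          simp only [Matrix.mul_assoc, mul_nonsing_inv_cancel_left _ _ hsu,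
            nonsing_inv_mul_cancel_left _ _ hsu]
      _ = B := by
          rw [hrB, Matrix.mul_assoc, Matrix.mul_assoc, mul_nonsing_inv _ hsu, Matrix.mul_one,
            nonsing_inv_mul_cancel_left _ _ hsu]
  rw [← conjTranspose_eq_transpose_of_trivial, hA.fromBlocks₁₁, hschur, sub_self]
  exact .zero

end Matrix

section sqrtm

variable {d : ℕ} {A : Matrix (Fin d) (Fin d) ℝ}

theorem sqrtm_eq_cfcSqrt (hA : A.PosSemidef) : sqrtm A = CFC.sqrt A := by
  rw [CFC.sqrt_eq_real_sqrt A hA.nonneg, cfcₙ_eq_cfc, hA.1.cfc_eq, sqrtm, dif_pos hA,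
    IsHermitian.cfc, Unitary.conjStarAlgAut_apply]
  rfl

theorem sqrtm_mul_self (hA : A.PosSemidef) : sqrtm A * sqrtm A = A := by
  rw [sqrtm_eq_cfcSqrt hA, CFC.sqrt_mul_sqrt_self A hA.nonneg]

theorem posDef_sqrtm (hA : A.PosDef) : (sqrtm A).PosDef := by
  rw [sqrtm_eq_cfcSqrt hA.posSemidef, ← isStrictlyPositive_iff_posDef]
  exact (CFC.isUnit_sqrt_iff_isStrictlyPositive.2 hA.isStrictlyPositive).isStrictlyPositive
    (CFC.sqrt_nonneg A)

theorem isGreatest_trace_of_posSemidef_fromBlocks {B : Matrix (Fin d) (Fin d) ℝ}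
    (hA : A.PosDef) (hB : B.PosDef) :
    IsGreatest {t | ∃ Y, (fromBlocks A Y Yᵀ B).PosSemidef ∧ t = Y.trace}
      (sqrtm (sqrtm A * B * sqrtm A)).trace := by
  set s := sqrtm A
  have hs : s.PosDef := posDef_sqrtm hA
  have hsBs : (s * B * s).PosDef := by
    simpa only [hs.1.eq] using hB.conjTranspose_mul_mul_same (mulVec_injective_of_isUnit hs.isUnit)
  set r := sqrtm (s * B * s)
  have hsA : s * s = A := sqrtm_mul_self hA.posSemidef
  have hrB : r * r = s * B * s := sqrtm_mul_self hsBs.posSemidef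
  have hr : r.PosDef := posDef_sqrtm hsBs
  refine ⟨⟨s * r * s⁻¹, posSemidef_fromBlocks_of_mul_self_eq hA hs hsA hr.1 hrB, ?_⟩, ?_⟩
  · rw [trace_mul_cycle, nonsing_inv_mul _ ((isUnit_iff_isUnit_det s).1 hs.isUnit),
      Matrix.one_mul]
  · rintro _ ⟨Y, hY, rfl⟩
    exact trace_le_of_posSemidef_fromBlocks hs hsA hr hrB hY

end sqrtm

theorem stmt13 {d : ℕ} (m₁ m₂ : EuclideanSpace ℝ (Fin d))
    (V₁ V₂ : Matrix (Fin d) (Fin d) ℝ) (h1 : V₁.PosDef) (h2 : V₂.PosDef) :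
    sInf {v | ∃ Z₁ Z₂ Y : Matrix (Fin d) (Fin d) ℝ,
        Z₁ = V₁ ∧ Z₂ = V₂ ∧ (Matrix.fromBlocks Z₁ Y Yᵀ Z₂).PosSemidef ∧
        v = ‖m₁ - m₂‖ ^ 2 + Z₁.trace + Z₂.trace - 2 * Y.trace} =
      ‖m₁ - m₂‖ ^ 2 + V₁.trace + V₂.trace
        - 2 * (sqrtm (sqrtm V₁ * V₂ * sqrtm V₁)).trace := by
  obtain ⟨⟨Y, hY, hYtrace⟩, hmax⟩ := isGreatest_trace_of_posSemidef_fromBlocks h1 h2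
  refine IsLeast.csInf_eq ⟨⟨V₁, V₂, Y, rfl, rfl, hY, by rw [hYtrace]⟩, ?_⟩
  rintro _ ⟨_, _, Y', rfl, rfl, hY', rfl⟩
  linarith [hmax ⟨Y', hY', rfl⟩]
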